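/- arXiv:2107.14284 — 4 statements merged into one kernel-verified Lean document; each statement's English description precedes it below -/
import Mathlib

section
/- For all positive integers a and b, p_a · p_b > p_{a+b}, where p_n denotes the n-th prime number. -/
/-!
For `a = 1` the claim is Bertrand's postulate. For `2 ≤ a ≤ b` put `u = p_a`, `v = p_b` and
`u * v = 2 * w + 1`; it suffices to find `a` primes in `(v, u * v)`, an interval containing
`(w, 2 * w]`. Keeping the primes of `(w, 2 * w]` in Erdős's bound for the central binomial
coefficient shows that `(w, 2 * w]` contains at least `k` primes whenever `w ≥ 1458` and
`2 * k ≤ √(2 * w) + 2`, and `k = a` qualifies because `u ≥ 2 * a - 1` and `u ^ 2 ≤ 2 * w + 1`.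
When `b ≤ 164`, so that `w` may be too small, `p_(a+b) ≤ p_(2b) < 3 * p_b ≤ p_a * p_b` instead,
the middle inequality being checked on the first 328 primes, listed by trial division.
-/

/-- The n-th prime (1-indexed): p_1 = 2, p_2 = 3, ... -/
noncomputable def nthPrime (i : ℕ) : ℕ := Nat.nth Nat.Prime (i - 1)

theorem Real.three_halves_sqrt_add_one_mul_log_le {x : ℝ} (hx : 1458 ≤ x) :
    (3 / 2 * √(2 * x) + 1) * log (2 * x) ≤ log 4 / 3 * (x - 2) := by
  let g : ℝ → ℝ := fun y => log y + 3 / 2 * (√y * log y)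
  have hg : ConcaveOn ℝ (Set.Ioi 1) g :=
    (strictConcaveOn_log_Ioi.concaveOn.subset (Set.Ioi_subset_Ioi zero_le_one) (convex_Ioi 1)).add
      (strictConcaveOn_sqrt_mul_log_Ioi.concaveOn.smul (by norm_num))
  let f : ℝ → ℝ := fun y => g (2 * y) - log 4 / 3 * y
  have hf : ConcaveOn ℝ (((2 : ℝ) • LinearMap.id : ℝ →ₗ[ℝ] ℝ) ⁻¹' Set.Ioi 1) f :=
    (hg.comp_linearMap _).sub ((convexOn_id (hg.comp_linearMap _).1).smul (by positivity))
  have h54 : √(2 * 1458 : ℝ) = 54 := by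
    rw [show (2 * 1458 : ℝ) = 54 ^ 2 by norm_num, sqrt_sq (by norm_num)]
  have h2 : √(2 * 2 : ℝ) = 2 := by
    rw [show (2 * 2 : ℝ) = 2 ^ 2 by norm_num, sqrt_sq (by norm_num)]
  have hlog : 246 * log 2916 ≤ 1456 * log 4 := by
    have := log_le_log (by positivity) (show (2916 : ℝ) ^ 246 ≤ (4 ^ 8) ^ 182 by norm_num)
    rwa [← pow_mul, log_pow, log_pow] at this
  have hlog4 : 0 < log 4 := log_pos (by norm_num)
  have hf1458 : f 1458 ≤ -(2 / 3) * log 4 := by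
    simp only [f, g, h54]; norm_num; linarith
  have hf2 : -(2 / 3) * log 4 ≤ f 2 := by
    simp only [f, g, h2]; norm_num; linarith
  have hfx : f x ≤ f 1458 :=
    hf.right_le_of_le_left'' (x := 2) (by simp; norm_num) (by simp; linarith) (by norm_num) hx
      (hf1458.trans hf2)
  simp only [f, g] at hfx
  linarith

open Nat Finset

open scoped Nat.Prime

namespace Nat

theorem two_mul_pow_mul_four_pow_le_four_pow {n k : ℕ} (hn : 1458 ≤ n)
    (hk : 2 * k ≤ sqrt (2 * n) + 2) : (2 * n) ^ (sqrt (2 * n) + k) * 4 ^ (2 * n / 3) ≤ 4 ^ n := by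
  have hnR : (1458 : ℝ) ≤ n := by exact_mod_cast hn
  have hexp : ((sqrt (2 * n) + k : ℕ) : ℝ) ≤ 3 / 2 * √(2 * n) + 1 := by
    have hs : (sqrt (2 * n) : ℝ) ≤ √(2 * n) := by exact_mod_cast Real.nat_sqrt_le_real_sqrt
    have hkR : (2 * k : ℝ) ≤ sqrt (2 * n) + 2 := by exact_mod_cast hk
    push_cast; linarith
  have hdiv : ((2 * n / 3 : ℕ) : ℝ) ≤ 2 * n / 3 := by
    simpa using (Nat.cast_div_le : ((2 * n / 3 : ℕ) : ℝ) ≤ (2 * n : ℕ) / (3 : ℕ))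
  have hlog : 0 ≤ Real.log (2 * n) := Real.log_nonneg (by linarith)
  rw [← Nat.cast_le (α := ℝ), ← Real.log_le_log_iff (by positivity) (by positivity)]
  push_cast
  rw [Real.log_mul (by positivity) (by positivity), Real.log_pow, Real.log_pow, Real.log_pow]
  calc ((sqrt (2 * n) + k : ℕ) : ℝ) * Real.log (2 * n) + ((2 * n / 3 : ℕ) : ℝ) * Real.log 4
      ≤ (3 / 2 * √(2 * n) + 1) * Real.log (2 * n) + 2 * n / 3 * Real.log 4 := by
        gcongr
    _ ≤ n * Real.log 4 := by
        have := Real.three_halves_sqrt_add_one_mul_log_le hnR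
        linarith [Real.log_pos (by norm_num : (1 : ℝ) < 4)]

theorem pow_factorization_centralBinom_le {n : ℕ} (hn : 2 < n) (p : ℕ) :
    p ^ (centralBinom n).factorization p ≤
      (if p.Prime ∧ p ≤ sqrt (2 * n) then 2 * n else 1) *
      (if p.Prime ∧ sqrt (2 * n) < p ∧ p ≤ 2 * n / 3 then p else 1) *
      (if p.Prime ∧ n < p then p else 1) := by
  by_cases hp : p.Prime
  swap
  · simp [hp, factorization_eq_zero_of_not_prime]
  have hs : sqrt (2 * n) ≤ n := Nat.lt_succ_iff.1 (sqrt_lt'.2 (by nlinarith))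
  rcases le_or_gt p (sqrt (2 * n)) with h1 | h1
  · rw [if_pos ⟨hp, h1⟩, if_neg (by omega), if_neg (by omega), mul_one, mul_one,
      centralBinom_eq_two_mul_choose]
    exact pow_factorization_choose_le (by omega)
  have hpow : p ^ (centralBinom n).factorization p ≤ p := by
    rw [centralBinom_eq_two_mul_choose]
    exact (Nat.pow_le_pow_right hp.pos (factorization_choose_le_one (sqrt_lt'.1 h1))).trans_eq
      (pow_one p)
  rcases le_or_gt p (2 * n / 3) with h2 | h2
  · rw [if_neg (by omega), if_pos ⟨hp, h1, h2⟩, if_neg (by omega)]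
    simpa using hpow
  rcases le_or_gt p n with h3 | h3
  · rw [factorization_centralBinom_of_two_mul_self_lt_three_mul hn h3 (by omega), pow_zero]
    rw [if_neg (by omega), if_neg (by omega), if_neg (by omega)]
    rfl
  · rw [if_neg (by omega), if_neg (by omega), if_pos ⟨hp, h3⟩]
    simpa using hpow

theorem centralBinom_le_mul_prod_primes_Ioc {n : ℕ} (hn : 2 < n) :
    centralBinom n ≤
      (2 * n) ^ sqrt (2 * n) * 4 ^ (2 * n / 3) * ∏ p ∈ Ioc n (2 * n) with p.Prime, p := by
  calc centralBinom n = ∏ p ∈ range (2 * n + 1), p ^ (centralBinom n).factorization p :=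
        (prod_pow_factorization_centralBinom n).symm
    _ ≤ ∏ p ∈ range (2 * n + 1), ((if p.Prime ∧ p ≤ sqrt (2 * n) then 2 * n else 1) *
          (if p.Prime ∧ sqrt (2 * n) < p ∧ p ≤ 2 * n / 3 then p else 1) *
          (if p.Prime ∧ n < p then p else 1)) :=
        prod_le_prod' fun p _ => pow_factorization_centralBinom_le hn p
    _ = (2 * n) ^ #{p ∈ range (2 * n + 1) | p.Prime ∧ p ≤ sqrt (2 * n)} *
          (∏ p ∈ range (2 * n + 1) with p.Prime ∧ sqrt (2 * n) < p ∧ p ≤ 2 * n / 3, p) *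
          ∏ p ∈ Ioc n (2 * n) with p.Prime, p := by
        have hIoc :
            {p ∈ range (2 * n + 1) | p.Prime ∧ n < p} = {p ∈ Ioc n (2 * n) | p.Prime} := by
          ext p
          simp only [mem_filter, mem_range, mem_Ioc]
          grind
        rw [prod_mul_distrib, prod_mul_distrib, ← prod_filter, ← prod_filter, ← prod_filter,
          prod_const, hIoc]
    _ ≤ (2 * n) ^ sqrt (2 * n) * 4 ^ (2 * n / 3) * ∏ p ∈ Ioc n (2 * n) with p.Prime, p := by
        gcongr
        · omega
        · calc #{p ∈ range (2 * n + 1) | p.Prime ∧ p ≤ sqrt (2 * n)}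
              ≤ #(Icc 1 (sqrt (2 * n))) := card_le_card fun p hp => by
                simp only [mem_filter, mem_Icc] at hp ⊢
                exact ⟨hp.2.1.one_le, hp.2.2⟩
            _ = sqrt (2 * n) := by simp
        · refine le_trans ?_ (primorial_le_four_pow _)
          refine prod_le_prod_of_subset_of_one_le' (fun p hp => ?_) fun p hp _ => ?_
          · simp only [mem_filter, mem_range] at hp ⊢
            exact ⟨by omega, hp.2.1⟩
          · exact (mem_filter.1 hp).2.one_le

theorem primeCounting_add_card_filter_Ioc {m n : ℕ} (h : m ≤ n) :
    π m + #{p ∈ Ioc m n | p.Prime} = π n := by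
  rw [← primesLE_card_eq_primeCounting, ← primesLE_card_eq_primeCounting,
    primesLE_eq_filter_Ioc_zero, primesLE_eq_filter_Ioc_zero, ← card_union_of_disjoint
    (disjoint_filter_filter (Ioc_disjoint_Ioc_of_le le_rfl)), ← filter_union,
    Ioc_union_Ioc_eq_Ioc m.zero_le h]

theorem primeCounting_add_le_primeCounting_two_mul {n k : ℕ} (hn : 1458 ≤ n)
    (hk : 2 * k ≤ sqrt (2 * n) + 2) : π n + k ≤ π (2 * n) := by
  rw [← primeCounting_add_card_filter_Ioc (by omega : n ≤ 2 * n), add_le_add_iff_left]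
  by_contra! hlt
  obtain ⟨j, rfl⟩ : ∃ j, k = j + 1 := ⟨k - 1, by omega⟩
  have hprod : ∏ p ∈ Ioc n (2 * n) with p.Prime, p ≤ (2 * n) ^ j :=
    (prod_le_pow_card _ _ _ fun p hp => (mem_Ioc.1 (mem_filter.1 hp).1).2).trans
      (Nat.pow_le_pow_right (by omega) (by omega))
  have := calc 4 ^ n
      < n * centralBinom n := four_pow_lt_mul_centralBinom n (by omega)
    _ ≤ 2 * n * ((2 * n) ^ sqrt (2 * n) * 4 ^ (2 * n / 3) * (2 * n) ^ j) := by
        gcongr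
        · omega
        · exact (centralBinom_le_mul_prod_primes_Ioc (by omega)).trans (by gcongr)
    _ = (2 * n) ^ (sqrt (2 * n) + (j + 1)) * 4 ^ (2 * n / 3) := by ring
    _ ≤ 4 ^ n := two_mul_pow_mul_four_pow_le_four_pow hn hk
  exact this.false

theorem nth_prime_succ_lt_two_mul (n : ℕ) : nth Prime (n + 1) < 2 * nth Prime n := by
  have hp := prime_nth_prime n
  obtain ⟨q, hq, hpq, hq2⟩ := exists_prime_lt_and_le_two_mul _ hp.ne_zero
  have hq_ne : q ≠ 2 * nth Prime n := by
    rintro rfl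
    exact Nat.not_prime_mul (by norm_num) hp.one_lt.ne' hq
  have hle : nth Prime (n + 1) ≤ q := by
    by_contra! h
    exact hpq.not_ge (le_nth_of_lt_nth_succ h hq)
  omega

theorem two_mul_add_one_le_nth_prime (n : ℕ) : 2 * n + 1 ≤ nth Prime n := by
  induction n with
  | zero => simp
  | succ n ih =>
    have hlt : nth Prime n < nth Prime (n + 1) :=
      (nth_lt_nth infinite_setOfPred_prime).2 (lt_add_one n)
    obtain ⟨t, ht⟩ := (prime_nth_prime (n + 1)).odd_of_ne_two
      (by have := add_two_le_nth_prime (n + 1); omega)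
    omega

theorem nth_eq_getElem_filter_range {p : ℕ → Prop} [DecidablePred p] {N j : ℕ}
    (hj : j < ((List.range N).filter (p ·)).length) :
    nth p j = ((List.range N).filter (p ·))[j] := by
  induction N with
  | zero => simp at hj
  | succ N ih =>
    simp only [List.range_succ, List.filter_append, List.length_append] at hj ⊢
    rcases lt_or_ge j ((List.range N).filter (p ·)).length with h | h
    · rw [List.getElem_append_left h, ih h]
    · have hN : p N := by by_contra hN; simp [hN] at hj; omega
      have hcount : ((List.range N).filter (p ·)).length = count p N := by
        rw [count, List.countP_eq_length_filter]
      simp only [hN, decide_true, List.filter_cons_of_pos, List.filter_nil,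
        List.length_cons, List.length_nil] at hj ⊢
      obtain rfl : j = count p N := by omega
      simp only [List.getElem_append_right h, hcount, Nat.sub_self, List.getElem_cons_zero]
      exact nth_count hN

def isPrimeTrialDiv (n : ℕ) : Bool :=
  2 ≤ n && (List.range' 2 57).all fun m => n < m * m || n % m != 0

theorem isPrimeTrialDiv_eq_decide {n : ℕ} (hn : n < 59 ^ 2) :
    isPrimeTrialDiv n = decide n.Prime := by
  have hsqrt : sqrt n < 59 := sqrt_lt'.2 hn
  rw [Bool.eq_iff_iff, decide_eq_true_iff, prime_def_le_sqrt]
  simp only [isPrimeTrialDiv, Bool.and_eq_true, decide_eq_true_eq, List.all_eq_true,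
    List.mem_range'_1, Bool.or_eq_true, bne_iff_ne, ne_eq]
  refine and_congr_right fun _ => ⟨fun h m hm hms hdvd => ?_, fun h m hm => ?_⟩
  · rcases h m ⟨hm, by omega⟩ with hlt | hmod
    · exact hlt.not_ge (le_sqrt.1 hms)
    · exact hmod (mod_eq_zero_of_dvd hdvd)
  · by_contra! hcon
    exact h m hm.1 (le_sqrt.2 hcon.1) (dvd_of_mod_eq_zero hcon.2)

def primesBelowTrialDiv (N : ℕ) : List ℕ :=
  (List.range N).filter isPrimeTrialDiv

theorem nth_prime_eq_getElem_primesBelowTrialDiv {N j : ℕ} (hN : N ≤ 59 ^ 2)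
    (hj : j < (primesBelowTrialDiv N).length) : nth Prime j = (primesBelowTrialDiv N)[j] := by
  have hfilter : (List.range N).filter (·.Prime) = primesBelowTrialDiv N :=
    List.filter_congr fun n hn => (isPrimeTrialDiv_eq_decide (by simp at hn; omega)).symm
  simp only [← hfilter] at hj ⊢
  exact nth_eq_getElem_filter_range hj

set_option maxRecDepth 10000 in
theorem length_primesBelowTrialDiv_2204 : (primesBelowTrialDiv 2204).length = 328 := by decide

theorem nth_prime_eq_getD_primesBelowTrialDiv_2204 {j : ℕ} (hj : j < 328) :
    nth Prime j = (primesBelowTrialDiv 2204).getD j 0 := by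
  have hj' : j < (primesBelowTrialDiv 2204).length := length_primesBelowTrialDiv_2204 ▸ hj
  rw [List.getD_eq_getElem _ _ hj',
    nth_prime_eq_getElem_primesBelowTrialDiv (N := 2204) (by norm_num)]

set_option maxRecDepth 10000 in
theorem nth_prime_two_mul_add_one_lt_three_mul {k : ℕ} (hk : k < 164) :
    nth Prime (2 * k + 1) < 3 * nth Prime k := by
  rw [nth_prime_eq_getD_primesBelowTrialDiv_2204 (by omega),
    nth_prime_eq_getD_primesBelowTrialDiv_2204 (by omega)]
  revert k
  decide

set_option maxRecDepth 10000 in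
theorem nth_prime_164_eq_977 : nth Prime 164 = 977 := by
  rw [nth_prime_eq_getD_primesBelowTrialDiv_2204 (by norm_num)]
  decide

theorem nth_prime_add_add_one_lt_mul_of_lt_164 {A B : ℕ} (hA : 1 ≤ A) (hAB : A ≤ B)
    (hB : B < 164) :
    nth Prime (A + B + 1) < nth Prime A * nth Prime B :=
  calc nth Prime (A + B + 1) ≤ nth Prime (2 * B + 1) :=
        nth_monotone infinite_setOfPred_prime (by omega)
    _ < 3 * nth Prime B := nth_prime_two_mul_add_one_lt_three_mul hB
    _ ≤ nth Prime A * nth Prime B := by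
        have := two_mul_add_one_le_nth_prime A
        gcongr
        omega

theorem nth_prime_add_add_one_lt_mul_of_164_le {A B : ℕ} (hA : 1 ≤ A) (hAB : A ≤ B)
    (hB : 164 ≤ B) :
    nth Prime (A + B + 1) < nth Prime A * nth Prime B := by
  set u := nth Prime A
  set v := nth Prime B
  have hu : 2 * A + 1 ≤ u := two_mul_add_one_le_nth_prime A
  have huv : u ≤ v := nth_monotone infinite_setOfPred_prime hAB
  have hv : 977 ≤ v := nth_prime_164_eq_977 ▸ nth_monotone infinite_setOfPred_prime hB
  obtain ⟨w, hw⟩ : Odd (u * v) :=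
    ((prime_nth_prime A).odd_of_ne_two (by omega)).mul
      ((prime_nth_prime B).odd_of_ne_two (by omega))
  have hvw : v ≤ w := by nlinarith
  have hπv : π v = B + 1 := count_nth_succ_of_infinite infinite_setOfPred_prime B
  have hπ := primeCounting_add_le_primeCounting_two_mul (n := w) (k := A + 1) (by nlinarith)
    (by have : 2 * A ≤ sqrt (2 * w) := le_sqrt.2 (by nlinarith); omega)
  apply nth_lt_of_lt_count
  rw [hw]
  change A + B + 1 < π (2 * w)
  have := monotone_primeCounting hvw
  omega

theorem nth_prime_add_add_one_lt_mul (A B : ℕ) :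
    nth Prime (A + B + 1) < nth Prime A * nth Prime B := by
  wlog hAB : A ≤ B generalizing A B
  · simpa only [add_comm A B, mul_comm] using this B A (by omega)
  rcases Nat.eq_zero_or_pos A with rfl | hA
  · simpa [mul_comm] using nth_prime_succ_lt_two_mul B
  rcases lt_or_ge B 164 with hB | hB
  · exact nth_prime_add_add_one_lt_mul_of_lt_164 hA hAB hB
  · exact nth_prime_add_add_one_lt_mul_of_164_le hA hAB hB

end Nat

theorem nthPrime_add_lt_mul (a b : ℕ) (ha : 1 ≤ a) (hb : 1 ≤ b) :
    nthPrime (a + b) < nthPrime a * nthPrime b := by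
  obtain ⟨A, rfl⟩ : ∃ A, a = A + 1 := ⟨a - 1, by omega⟩
  obtain ⟨B, rfl⟩ : ∃ B, b = B + 1 := ⟨b - 1, by omega⟩
  simpa only [nthPrime, Nat.add_sub_cancel, show A + 1 + (B + 1) - 1 = A + B + 1 by omega]
    using Nat.nth_prime_add_add_one_lt_mul A B
end

section
/- For every positive integer d ≥ 2, the ratio log(p_d)/log(d) is at most log 3 / log 2, where p_d is the d-th prime. -/
set_option maxRecDepth 8000

lemma count6 : 3 ≤ Nat.count Nat.Prime 6 := by
  have hs : ({2,3,5} : Finset ℕ) ⊆ Finset.filter Nat.Prime (Finset.range 6) := by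
    intro x hx
    fin_cases hx <;> simp <;> norm_num
  have := Finset.card_le_card hs
  rw [← Nat.count_eq_card_filter_range] at this
  simpa using this

lemma count9 : 4 ≤ Nat.count Nat.Prime 9 := by
  have hs : ({2,3,5,7} : Finset ℕ) ⊆ Finset.filter Nat.Prime (Finset.range 9) := by
    intro x hx
    fin_cases hx <;> simp <;> norm_num
  have := Finset.card_le_card hs
  rw [← Nat.count_eq_card_filter_range] at this
  simpa using this

lemma count13 : 5 ≤ Nat.count Nat.Prime 13 := by
  have hs : ({2,3,5,7,11} : Finset ℕ) ⊆ Finset.filter Nat.Prime (Finset.range 13) := by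
    intro x hx
    fin_cases hx <;> simp <;> norm_num
  have := Finset.card_le_card hs
  rw [← Nat.count_eq_card_filter_range] at this
  simpa using this

lemma count18 : 7 ≤ Nat.count Nat.Prime 18 := by
  have hs : ({2,3,5,7,11,13,17} : Finset ℕ) ⊆ Finset.filter Nat.Prime (Finset.range 18) := by
    intro x hx
    fin_cases hx <;> simp <;> norm_num
  have := Finset.card_le_card hs
  rw [← Nat.count_eq_card_filter_range] at this
  simpa using this

lemma count27 : 9 ≤ Nat.count Nat.Prime 27 := by
  have hs : ({2,3,5,7,11,13,17,19,23} : Finset ℕ) ⊆ Finset.filter Nat.Prime (Finset.range 27) := by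
    intro x hx
    fin_cases hx <;> simp <;> norm_num
  have := Finset.card_le_card hs
  rw [← Nat.count_eq_card_filter_range] at this
  simpa using this

lemma count39 : 12 ≤ Nat.count Nat.Prime 39 := by
  have hs : ({2,3,5,7,11,13,17,19,23,29,31,37} : Finset ℕ) ⊆ Finset.filter Nat.Prime (Finset.range 39) := by
    intro x hx
    fin_cases hx <;> simp <;> norm_num
  have := Finset.card_le_card hs
  rw [← Nat.count_eq_card_filter_range] at this
  simpa using this

lemma count59 : 16 ≤ Nat.count Nat.Prime 59 := by
  have hs : ({2,3,5,7,11,13,17,19,23,29,31,37,41,43,47,53} : Finset ℕ) ⊆ Finset.filter Nat.Prime (Finset.range 59) := by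
    intro x hx
    fin_cases hx <;> simp <;> norm_num
  have := Finset.card_le_card hs
  rw [← Nat.count_eq_card_filter_range] at this
  simpa using this

lemma count89 : 23 ≤ Nat.count Nat.Prime 89 := by
  have hs : ({2,3,5,7,11,13,17,19,23,29,31,37,41,43,47,53,59,61,67,71,73,79,83} : Finset ℕ) ⊆ Finset.filter Nat.Prime (Finset.range 89) := by
    intro x hx
    fin_cases hx <;> simp <;> norm_num
  have := Finset.card_le_card hs
  rw [← Nat.count_eq_card_filter_range] at this
  simpa using this

lemma count154 : 36 ≤ Nat.count Nat.Prime 154 := by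
  have hs : ({2,3,5,7,11,13,17,19,23,29,31,37,41,43,47,53,59,61,67,71,73,79,83,89,97,101,103,107,109,113,127,131,137,139,149,151} : Finset ℕ) ⊆ Finset.filter Nat.Prime (Finset.range 154) := by
    intro x hx
    fin_cases hx <;> simp <;> norm_num
  have := Finset.card_le_card hs
  rw [← Nat.count_eq_card_filter_range] at this
  simpa using this

lemma count305 : 62 ≤ Nat.count Nat.Prime 305 := by
  have hs : ({2,3,5,7,11,13,17,19,23,29,31,37,41,43,47,53,59,61,67,71,73,79,83,89,97,101,103,107,109,113,127,131,137,139,149,151,157,163,167,173,179,181,191,193,197,199,211,223,227,229,233,239,241,251,257,263,269,271,277,281,283,293} : Finset ℕ) ⊆ Finset.filter Nat.Prime (Finset.range 305) := by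
    intro x hx
    fin_cases hx <;> simp <;> norm_num
  have := Finset.card_le_card hs
  rw [← Nat.count_eq_card_filter_range] at this
  simpa using this

/-- Chebyshev-type bound: the central binomial coefficient is at most
`(2n) ^ π(2n)`. -/
lemma centralBinom_le_pow (n : ℕ) (hn : 0 < n) :
    Nat.centralBinom n ≤ (2 * n) ^ (Nat.count Nat.Prime (2 * n + 1)) := by
  have h0 : Nat.centralBinom n ≠ 0 := (Nat.centralBinom_pos n).ne'
  have h2n : 0 < 2 * n := by omega
  have hsub : (Nat.centralBinom n).factorization.support ⊆
      Finset.filter Nat.Prime (Finset.range (2 * n + 1)) := by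
    intro p hp
    have hpp : p.Prime := by
      have : p ∈ (Nat.centralBinom n).primeFactors := by
        rwa [← Nat.support_factorization]
      exact Nat.prime_of_mem_primeFactors this
    have h1 : 1 ≤ (Nat.centralBinom n).factorization p := by
      have := Finsupp.mem_support_iff.mp hp
      omega
    have h2 : p ^ (Nat.centralBinom n).factorization p ≤ 2 * n := by
      have : p ^ ((2 * n).choose n).factorization p ≤ 2 * n :=
        Nat.pow_factorization_choose_le h2n
      simpa [Nat.centralBinom] using this
    have hple : p ≤ 2 * n := by
      calc p = p ^ 1 := (pow_one p).symm
        _ ≤ p ^ (Nat.centralBinom n).factorization p :=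
            Nat.pow_le_pow_right hpp.one_lt.le h1
        _ ≤ 2 * n := h2
    simp only [Finset.mem_filter, Finset.mem_range]
    exact ⟨by omega, hpp⟩
  calc Nat.centralBinom n
      = (Nat.centralBinom n).factorization.prod (· ^ ·) :=
        (Nat.factorization_prod_pow_eq_self h0).symm
    _ = ∏ p ∈ (Nat.centralBinom n).factorization.support,
          p ^ (Nat.centralBinom n).factorization p := rfl
    _ ≤ ∏ p ∈ (Nat.centralBinom n).factorization.support, 2 * n := by
        apply Finset.prod_le_prod
        · intro i _; positivity
        · intro p hp
          have hpp : p.Prime := by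
            have : p ∈ (Nat.centralBinom n).primeFactors := by
              rwa [← Nat.support_factorization]
            exact Nat.prime_of_mem_primeFactors this
          have : p ^ ((2 * n).choose n).factorization p ≤ 2 * n :=
            Nat.pow_factorization_choose_le h2n
          simpa [Nat.centralBinom] using this
    _ = (2 * n) ^ (Nat.centralBinom n).factorization.support.card :=
        Finset.prod_const _
    _ ≤ (2 * n) ^ (Nat.count Nat.Prime (2 * n + 1)) := by
        apply Nat.pow_le_pow_right h2n
        rw [Nat.count_eq_card_filter_range]
        exact Finset.card_le_card hsub

lemma four_pow_lt (n : ℕ) (hn : 4 ≤ n) :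
    4 ^ n < (2 * n) ^ (Nat.count Nat.Prime (2 * n + 1) + 1) := by
  calc 4 ^ n < n * Nat.centralBinom n := Nat.four_pow_lt_mul_centralBinom n hn
    _ ≤ (2 * n) * (2 * n) ^ (Nat.count Nat.Prime (2 * n + 1)) := by
        apply Nat.mul_le_mul (by omega) (centralBinom_le_pow n (by omega))
    _ = (2 * n) ^ (Nat.count Nat.Prime (2 * n + 1) + 1) := by ring

lemma nthPrime_le_of_pow (d n : ℕ) (hn : 4 ≤ n) (hd : 1 ≤ d)
    (h : (2 * n) ^ (d + 2) ≤ 4 ^ n) : nthPrime d ≤ 2 * n := by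
  have h1 : (2 * n) ^ (d + 2) < (2 * n) ^ (Nat.count Nat.Prime (2 * n + 1) + 1) :=
    lt_of_le_of_lt h (four_pow_lt n hn)
  have hb : 1 < 2 * n := by omega
  have h2 : d + 2 < Nat.count Nat.Prime (2 * n + 1) + 1 :=
    (Nat.pow_lt_pow_iff_right hb).mp h1
  have h3 : d - 1 < Nat.count Nat.Prime (2 * n + 1) := by omega
  have h4 := Nat.nth_lt_of_lt_count h3
  unfold nthPrime
  omega

lemma batch (a b m d : ℕ) (hcount : b ≤ Nat.count Nat.Prime (m + 1))
    (hm : m ^ 12 ≤ a ^ 19) (h1 : a ≤ d) (h2 : d ≤ b) (hd : 1 ≤ d) :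
    nthPrime d ^ 12 ≤ d ^ 19 := by
  have h3 : d - 1 < Nat.count Nat.Prime (m + 1) := by omega
  have h4 := Nat.nth_lt_of_lt_count h3
  have h5 : nthPrime d ≤ m := by unfold nthPrime; omega
  calc nthPrime d ^ 12 ≤ m ^ 12 := Nat.pow_le_pow_left h5 12
    _ ≤ a ^ 19 := hm
    _ ≤ d ^ 19 := Nat.pow_le_pow_left h1 19

lemma small_case (d : ℕ) (h3 : 3 ≤ d) (h62 : d ≤ 62) :
    nthPrime d ^ 12 ≤ d ^ 19 := by
  rcases le_or_gt d 3 with h | h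
  · exact batch 3 3 5 d count6 (by norm_num) (by omega) (by omega) (by omega)
  rcases le_or_gt d 4 with h' | h'
  · exact batch 4 4 8 d count9 (by norm_num) (by omega) (by omega) (by omega)
  rcases le_or_gt d 5 with h2 | h2
  · exact batch 5 5 12 d count13 (by norm_num) (by omega) (by omega) (by omega)
  rcases le_or_gt d 7 with h2' | h2'
  · exact batch 6 7 17 d count18 (by norm_num) (by omega) (by omega) (by omega)
  rcases le_or_gt d 9 with h4 | h4
  · exact batch 8 9 26 d count27 (by norm_num) (by omega) (by omega) (by omega)
  rcases le_or_gt d 12 with h5 | h5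
  · exact batch 10 12 38 d count39 (by norm_num) (by omega) (by omega) (by omega)
  rcases le_or_gt d 16 with h6 | h6
  · exact batch 13 16 58 d count59 (by norm_num) (by omega) (by omega) (by omega)
  rcases le_or_gt d 23 with h7 | h7
  · exact batch 17 23 88 d count89 (by norm_num) (by omega) (by omega) (by omega)
  rcases le_or_gt d 36 with h8 | h8
  · exact batch 24 36 153 d count154 (by norm_num) (by omega) (by omega) (by omega)
  · exact batch 37 62 304 d count305 (by norm_num) (by omega) (by omega) (by omega)
lemma log_le_div_e {y : ℝ} (hy : 0 < y) : Real.log y ≤ y / Real.exp 1 := by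
  have h1 : Real.log (y / Real.exp 1) ≤ y / Real.exp 1 - 1 :=
    Real.log_le_sub_one_of_pos (by positivity)
  rw [Real.log_div hy.ne' (Real.exp_ne_zero 1), Real.log_exp] at h1
  linarith

lemma core_ineq (d : ℕ) (hd : 63 ≤ d) :
    ((d : ℝ) + 2) * Real.log ((d : ℝ) ^ ((19 : ℝ) / 12)) ≤
      ((d : ℝ) ^ ((19 : ℝ) / 12) - 2) * Real.log 2 := by
  have hd0 : (0 : ℝ) < d := by positivity
  set t : ℝ := (d : ℝ) ^ ((1 : ℝ) / 12) with ht_def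
  have ht0 : 0 < t := Real.rpow_pos_of_pos hd0 _
  have ht12 : t ^ 12 = (d : ℝ) := by
    rw [ht_def, ← Real.rpow_natCast ((d : ℝ) ^ ((1:ℝ)/12)) 12, ← Real.rpow_mul hd0.le]
    norm_num
  have hx : (d : ℝ) ^ ((19 : ℝ) / 12) = t ^ 19 := by
    rw [ht_def, ← Real.rpow_natCast ((d : ℝ) ^ ((1:ℝ)/12)) 19, ← Real.rpow_mul hd0.le]
    norm_num
  have hlogx : Real.log ((d : ℝ) ^ ((19 : ℝ) / 12)) = (19 / 12) * Real.log d :=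
    Real.log_rpow hd0 _
  have ht141 : (1.41 : ℝ) ≤ t := by
    by_contra hcon
    push_neg at hcon
    have h1 : t ^ 12 < (1.41 : ℝ) ^ 12 := by
      apply pow_lt_pow_left₀ hcon ht0.le
      norm_num
    have h2 : ((1.41 : ℝ)) ^ 12 < 63 := by norm_num
    have h3 : (63 : ℝ) ≤ (d : ℝ) := by exact_mod_cast hd
    rw [ht12] at h1
    linarith
  have ht1 : (1 : ℝ) ≤ t := by linarith
  have hlogd_eq : Real.log (d : ℝ) = 6 * Real.log (t ^ 2) := by
    rw [← ht12]
    rw [show (t:ℝ) ^ 12 = (t ^ 2) ^ 6 by ring, Real.log_pow]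
    push_cast; ring
  have he : (2.7182818 : ℝ) < Real.exp 1 := by
    have := Real.exp_one_gt_d9
    linarith
  have hlogd_le : Real.log (d : ℝ) ≤ 2.2075 * t ^ 2 := by
    rw [hlogd_eq]
    have h1 : Real.log (t ^ 2) ≤ t ^ 2 / Real.exp 1 := log_le_div_e (by positivity)
    have h2 : t ^ 2 / Real.exp 1 ≤ t ^ 2 / 2.7182818 := by
      apply div_le_div_of_nonneg_left (by positivity) (by norm_num) he.le
    have h3 : Real.log (t ^ 2) ≤ t ^ 2 / 2.7182818 := h1.trans h2
    rw [le_div_iff₀ (by norm_num : (0:ℝ) < 2.7182818)] at h3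
    nlinarith [sq_nonneg t, h3]
  have hlog2 : (0.6931 : ℝ) ≤ Real.log 2 := by
    have := Real.log_two_gt_d9
    linarith
  have hlog2ub : Real.log 2 ≤ 0.6932 := by
    have := Real.log_two_lt_d9
    linarith
  have h5 : (5.57 : ℝ) ≤ t ^ 5 := by
    calc (5.57 : ℝ) ≤ 1.41 ^ 5 := by norm_num
      _ ≤ t ^ 5 := by apply pow_le_pow_left₀ (by norm_num) ht141
  have h12 : (61.7 : ℝ) ≤ t ^ 12 := by
    calc (61.7 : ℝ) ≤ 1.41 ^ 12 := by norm_num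
      _ ≤ t ^ 12 := by apply pow_le_pow_left₀ (by norm_num) ht141
  have ht2 : (1.98 : ℝ) ≤ t ^ 2 := by
    calc (1.98 : ℝ) ≤ 1.41 ^ 2 := by norm_num
      _ ≤ t ^ 2 := by apply pow_le_pow_left₀ (by norm_num) ht141
  have h19two : (2 : ℝ) ≤ t ^ 19 := by
    calc (2 : ℝ) ≤ 1.41 ^ 19 := by norm_num
      _ ≤ t ^ 19 := by apply pow_le_pow_left₀ (by norm_num) ht141
  rw [hlogx, hx]
  have hlogd_nn : 0 ≤ Real.log (d : ℝ) := Real.log_nonneg (by exact_mod_cast Nat.one_le_iff_ne_zero.mpr (by omega))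
  have hdt : (d : ℝ) = t ^ 12 := ht12.symm
  rw [hdt]
  -- goal: (t^12 + 2) * (19/12 * log d) ≤ (t^19 - 2) * log 2
  have step1 : (t ^ 12 + 2) * (19 / 12 * Real.log (d : ℝ)) ≤
      (t ^ 12 + 2) * (19 / 12 * (2.2075 * t ^ 2)) := by
    apply mul_le_mul_of_nonneg_left _ (by positivity)
    linarith
  have step2 : (t ^ 19 - 2) * (0.6931 : ℝ) ≤ (t ^ 19 - 2) * Real.log 2 := by
    apply mul_le_mul_of_nonneg_left hlog2 (by linarith)
  have poly : (t ^ 12 + 2) * (19 / 12 * (2.2075 * t ^ 2)) ≤ (t ^ 19 - 2) * (0.6931 : ℝ) := by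
    nlinarith [mul_nonneg (sub_nonneg.mpr h5) (pow_nonneg ht0.le 14),
      mul_nonneg (sub_nonneg.mpr h12) (pow_nonneg ht0.le 2),
      pow_nonneg ht0.le 14, sq_nonneg t]
  rw [hdt] at step1
  linarith

lemma big_case (d : ℕ) (hd : 63 ≤ d) : nthPrime d ^ 12 ≤ d ^ 19 := by
  have hd0 : (0 : ℝ) < d := by positivity
  have hd1 : (1 : ℝ) ≤ d := by exact_mod_cast (by omega : 1 ≤ d)
  set x : ℝ := (d : ℝ) ^ ((19 : ℝ) / 12) with hx_def
  have hx0 : 0 < x := Real.rpow_pos_of_pos hd0 _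
  have hdx : (d : ℝ) ≤ x := by
    have := Real.rpow_le_rpow_of_exponent_le hd1 (by norm_num : (1:ℝ) ≤ 19/12)
    rwa [Real.rpow_one] at this
  have hx63 : (63 : ℝ) ≤ x := le_trans (by exact_mod_cast hd) hdx
  set m : ℕ := ⌊x⌋₊ with hm_def
  have hm63 : 63 ≤ m := Nat.le_floor (by exact_mod_cast hx63)
  set n : ℕ := m / 2 with hn_def
  have hn4 : 4 ≤ n := by omega
  have hNm : 2 * n ≤ m := by omega
  have hmN : m ≤ 2 * n + 1 := by omega
  have hNx : ((2 * n : ℕ) : ℝ) ≤ x := by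
    calc ((2 * n : ℕ) : ℝ) ≤ (m : ℝ) := by exact_mod_cast hNm
      _ ≤ x := Nat.floor_le hx0.le
  have hxN : x - 2 ≤ ((2 * n : ℕ) : ℝ) := by
    have h1 : x < m + 1 := Nat.lt_floor_add_one x
    have h2 : (m : ℝ) ≤ 2 * n + 1 := by exact_mod_cast hmN
    push_cast
    push_cast at h2
    linarith
  -- key: (2n)^(d+2) ≤ 4^n
  have key : (2 * n) ^ (d + 2) ≤ 4 ^ n := by
    have hcore := core_ineq d hd
    have c1 : (((2 * n : ℕ)) : ℝ) ^ (d + 2) ≤ x ^ (d + 2) :=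
      pow_le_pow_left₀ (by positivity) hNx _
    have c2 : x ^ (d + 2) ≤ (2 : ℝ) ^ (x - 2) := by
      rw [← Real.rpow_natCast x (d + 2), Real.rpow_def_of_pos hx0,
        Real.rpow_def_of_pos (by norm_num : (0:ℝ) < 2)]
      apply Real.exp_le_exp.mpr
      rw [← hx_def] at hcore
      push_cast
      calc Real.log x * ((d : ℝ) + 2) = ((d : ℝ) + 2) * Real.log x := by ring
        _ ≤ (x - 2) * Real.log 2 := hcore
        _ = Real.log 2 * (x - 2) := by ring
    have c3 : (2 : ℝ) ^ (x - 2) ≤ (2 : ℝ) ^ (((2 * n : ℕ) : ℝ)) :=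
      Real.rpow_le_rpow_of_exponent_le (by norm_num) hxN
    have c4 : (2 : ℝ) ^ (((2 * n : ℕ) : ℝ)) = ((4 ^ n : ℕ) : ℝ) := by
      rw [Real.rpow_natCast]
      push_cast
      rw [pow_mul]
      norm_num
    have := le_trans (le_trans c1 c2) (le_of_le_of_eq c3 c4)
    have h5 : (((2 * n) ^ (d + 2) : ℕ) : ℝ) ≤ ((4 ^ n : ℕ) : ℝ) := by push_cast at this ⊢; linarith
    exact_mod_cast h5
  have hp : nthPrime d ≤ 2 * n := nthPrime_le_of_pow d n hn4 (by omega) key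
  have h12 : (2 * n) ^ 12 ≤ d ^ 19 := by
    have c1 : (((2 * n : ℕ)) : ℝ) ^ 12 ≤ x ^ 12 :=
      pow_le_pow_left₀ (by positivity) hNx _
    have c2 : x ^ 12 = ((d : ℝ)) ^ (19 : ℕ) := by
      rw [hx_def, ← Real.rpow_natCast ((d : ℝ) ^ ((19:ℝ)/12)) 12, ← Real.rpow_mul hd0.le,
        show ((19:ℝ)/12 * ((12:ℕ):ℝ)) = ((19 : ℕ) : ℝ) by push_cast; norm_num,
        Real.rpow_natCast]
    rw [c2] at c1
    exact_mod_cast c1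
  calc nthPrime d ^ 12 ≤ (2 * n) ^ 12 := Nat.pow_le_pow_left hp 12
    _ ≤ d ^ 19 := h12
theorem log_nthPrime_div_log_le (d : ℕ) (hd : 2 ≤ d) :
    Real.log (nthPrime d) / Real.log d ≤ Real.log 3 / Real.log 2 := by
  rcases eq_or_lt_of_le hd with h2 | h3
  · -- d = 2 : nthPrime 2 = 3
    subst h2  -- careful direction
    have hc : Nat.count Nat.Prime 3 = 1 := by simp [Nat.count_succ]; norm_num
    have h3 : Nat.nth Nat.Prime 1 = 3 := by
      have := Nat.nth_count (p := Nat.Prime) (n := 3) (by norm_num)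
      rwa [hc] at this
    have : nthPrime 2 = 3 := by unfold nthPrime; simpa using h3
    rw [this]
    norm_num
  · have h3d : 3 ≤ d := h3
    have hP : nthPrime d ^ 12 ≤ d ^ 19 := by
      rcases le_or_gt d 62 with h | h
      · exact small_case d h3d h
      · exact big_case d (by omega)
    have hp2 : 2 ≤ nthPrime d := by
      have := Nat.prime_nth_prime (d - 1)
      exact this.two_le
    have hp0 : (1 : ℝ) ≤ (nthPrime d : ℝ) := by exact_mod_cast (by omega : 1 ≤ nthPrime d)
    have hd1 : (1 : ℝ) < (d : ℝ) := by exact_mod_cast (by omega : 1 < d)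
    have hlogp : 12 * Real.log (nthPrime d) ≤ 19 * Real.log d := by
      have hc : ((nthPrime d : ℝ)) ^ 12 ≤ ((d : ℝ)) ^ 19 := by exact_mod_cast hP
      have := Real.log_le_log (by positivity) hc
      rwa [Real.log_pow, Real.log_pow] at this
      -- exponents as nat casts
    have hlog23 : 19 * Real.log 2 ≤ 12 * Real.log 3 := by
      have hc : ((2 : ℝ)) ^ 19 ≤ ((3 : ℝ)) ^ 12 := by norm_num
      have := Real.log_le_log (by positivity) hc
      rwa [Real.log_pow, Real.log_pow] at this
    have hld : 0 < Real.log d := Real.log_pos hd1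
    have hl2 : 0 < Real.log 2 := Real.log_pos (by norm_num)
    have hlp : 0 ≤ Real.log (nthPrime d) := Real.log_nonneg hp0
    rw [div_le_div_iff₀ hld hl2]
    nlinarith [mul_le_mul_of_nonneg_right hlogp hl2.le,
      mul_le_mul_of_nonneg_left hlog23 hld.le]
end

section
/- Fix k ≥ 2, and let S_k be the set of positive integers none of whose prime factors has index divisible by k (where the index of the n-th prime is n). Then the arithmetic density of S_k is 0, i.e., lim_{x→∞} #{n ∈ S_k : n ≤ x}/x = 0. -/
open Filter

open Finset

/-- The 1-based index of a prime p: the n such that p is the n-th prime. -/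
def primeIdx (p : ℕ) : ℕ := Nat.count Nat.Prime p + 1

lemma not_summable_one_div_nth_prime :
    ¬ Summable (fun n : ℕ => (1 : ℝ) / (Nat.nth Nat.Prime n)) := by
  intro h
  apply Nat.Primes.not_summable_one_div
  rw [← Equiv.summable_iff
    (⟨fun n => ⟨Nat.nth Nat.Prime n, Nat.prime_nth_prime n⟩,
      fun p => Nat.count Nat.Prime p,
      fun n => Nat.count_nth_of_infinite Nat.infinite_setOf_prime n,
      fun p => Subtype.ext (Nat.nth_count p.2)⟩ : ℕ ≃ Nat.Primes)]
  exact h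

lemma sum_block_bound (k : ℕ) (hk : 2 ≤ k) (m : ℕ) :
    ∑ n ∈ range ((m+1)*k), (1:ℝ)/(Nat.nth Nat.Prime n)
      ≤ k/2 + k * ∑ j ∈ range m, (1:ℝ)/(Nat.nth Nat.Prime (j*k + (k-1))) := by
  induction m with
  | zero =>
      simp only [range_zero, sum_empty, mul_zero, add_zero, zero_add, one_mul]
      calc ∑ n ∈ range k, (1:ℝ)/(Nat.nth Nat.Prime n)
          ≤ (range k).card • (1/2 : ℝ) := by
            refine Finset.sum_le_card_nsmul _ _ _ fun n _ => ?_
            apply div_le_div_of_nonneg_left one_pos.le two_pos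
            exact_mod_cast (Nat.prime_nth_prime n).two_le
        _ = k/2 := by simp [nsmul_eq_mul]; ring
  | succ m ih =>
      have h1 : (m+1+1)*k = (m+1)*k + k := by ring
      have split : ∑ n ∈ range ((m+1)*k + k), (1:ℝ)/(Nat.nth Nat.Prime n)
          = ∑ n ∈ range ((m+1)*k), (1:ℝ)/(Nat.nth Nat.Prime n)
            + ∑ n ∈ Finset.Ico ((m+1)*k) ((m+1)*k + k), (1:ℝ)/(Nat.nth Nat.Prime n) := by
        simp only [Finset.range_eq_Ico]
        exact (Finset.sum_Ico_consecutive _ (Nat.zero_le _) (Nat.le_add_right _ _)).symm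
      have h2 : ∑ n ∈ Finset.Ico ((m+1)*k) ((m+1)*k + k), (1:ℝ)/(Nat.nth Nat.Prime n)
          ≤ k * (1/(Nat.nth Nat.Prime (m*k + (k-1)))) := by
        calc ∑ n ∈ Finset.Ico ((m+1)*k) ((m+1)*k + k), (1:ℝ)/(Nat.nth Nat.Prime n)
            ≤ (Finset.Ico ((m+1)*k) ((m+1)*k + k)).card •
              ((1:ℝ)/(Nat.nth Nat.Prime (m*k + (k-1)))) := by
              refine Finset.sum_le_card_nsmul _ _ _ fun n hn => ?_
              rw [Finset.mem_Ico] at hn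
              apply div_le_div_of_nonneg_left one_pos.le
              · exact_mod_cast (Nat.prime_nth_prime _).pos
              · have e : (m+1)*k = m*k + k := by ring
                have : m*k + (k-1) ≤ n := by have := hn.1; omega
                exact_mod_cast Nat.nth_monotone Nat.infinite_setOf_prime this
          _ = k * (1/(Nat.nth Nat.Prime (m*k + (k-1)))) := by
              rw [Nat.card_Ico, Nat.add_sub_cancel_left, nsmul_eq_mul]
      rw [h1, split, Finset.sum_range_succ]
      calc _ ≤ (k/2 + k * ∑ j ∈ range m, (1:ℝ)/(Nat.nth Nat.Prime (j*k + (k-1))))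
            + k * (1/(Nat.nth Nat.Prime (m*k + (k-1)))) := add_le_add ih h2
        _ = _ := by ring

lemma tendsto_q_sums (k : ℕ) (hk : 2 ≤ k)
    (hns : ¬ Summable (fun n : ℕ => (1 : ℝ) / (Nat.nth Nat.Prime n))) :
    Tendsto (fun m => ∑ j ∈ range m, (1:ℝ)/(Nat.nth Nat.Prime (j*k + (k-1))))
      atTop atTop := by
  have hS : Tendsto (fun N => ∑ n ∈ range N, (1:ℝ)/(Nat.nth Nat.Prime n)) atTop atTop :=
    (not_summable_iff_tendsto_nat_atTop_of_nonneg (fun n => by positivity)).mp hns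
  have hcomp : Tendsto (fun m : ℕ => ∑ n ∈ range ((m+1)*k), (1:ℝ)/(Nat.nth Nat.Prime n))
      atTop atTop := by
    apply hS.comp
    apply tendsto_atTop_atTop_of_monotone
    · intro a b hab; exact Nat.mul_le_mul_right k (by omega)
    · intro b; exact ⟨b, le_trans (Nat.le_add_right b 1) (Nat.le_mul_of_pos_right _ (by omega))⟩
  have hk0 : (0:ℝ) < k := by positivity
  have h3 : Tendsto (fun m : ℕ =>
      ((∑ n ∈ range ((m+1)*k), (1:ℝ)/(Nat.nth Nat.Prime n)) - k/2) / k) atTop atTop :=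
    (hcomp.atTop_add tendsto_const_nhds).atTop_div_const hk0
  refine tendsto_atTop_mono (fun m => ?_) h3
  rw [div_le_iff₀ hk0]
  nlinarith [sum_block_bound k hk m]

lemma totient_prod_primes' {s : Finset ℕ} {f : ℕ → ℕ} (hf : ∀ j ∈ s, (f j).Prime)
    (hinj : Set.InjOn f s) : (∏ j ∈ s, f j).totient = ∏ j ∈ s, (f j - 1) := by
  classical
  induction s using Finset.induction with
  | empty => simp
  | @insert a s ha ih =>
      have hap : (f a).Prime := hf a (mem_insert_self a s)
      have hinj' : Set.InjOn f s :=
        hinj.mono (Finset.coe_subset.mpr (Finset.subset_insert a s))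
      have hcop : Nat.Coprime (f a) (∏ p ∈ s, f p) :=
        Nat.Coprime.prod_right fun p hp =>
          (Nat.coprime_primes hap (hf p (mem_insert_of_mem hp))).mpr
            (fun e => by
              have hap' : a = p := hinj (Finset.mem_coe.mpr (mem_insert_self a s))
                (Finset.mem_coe.mpr (mem_insert_of_mem hp)) e
              exact ha (hap' ▸ hp))
      rw [Finset.prod_insert ha, Finset.prod_insert ha, Nat.totient_mul hcop,
        Nat.totient_prime hap, ih (fun p hp => hf p (mem_insert_of_mem hp)) hinj']

lemma card_coprime_Ico_mul (M : ℕ) (q : ℕ) :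
    ((Finset.Ico 0 (q*M)).filter (Nat.Coprime M)).card ≤ q * M.totient := by
  induction q with
  | zero => simp
  | succ q ih =>
      have h1 : (q+1)*M = q*M + M := by ring
      have h2 : Finset.Ico 0 ((q+1)*M) = Finset.Ico 0 (q*M) ∪ Finset.Ico (q*M) (q*M + M) := by
        rw [h1, Finset.Ico_union_Ico_eq_Ico (Nat.zero_le _) (Nat.le_add_right _ _)]
      rw [h2, Finset.filter_union]
      calc _ ≤ ((Finset.Ico 0 (q*M)).filter (Nat.Coprime M)).card
            + ((Finset.Ico (q*M) (q*M + M)).filter (Nat.Coprime M)).card :=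
            Finset.card_union_le _ _
        _ ≤ q * M.totient + M.totient := by
            rw [Nat.filter_coprime_Ico_eq_totient M (q*M)]
            exact Nat.add_le_add_right ih _
        _ = (q+1) * M.totient := by ring

lemma card_coprime_Icc (M x : ℕ) (hM : 0 < M) :
    ((Finset.Icc 1 x).filter (Nat.Coprime M)).card ≤ (x / M + 1) * M.totient := by
  calc ((Finset.Icc 1 x).filter (Nat.Coprime M)).card
      ≤ ((Finset.Ico 0 ((x/M+1)*M)).filter (Nat.Coprime M)).card := by
        apply Finset.card_le_card
        apply Finset.filter_subset_filter
        intro n hn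
        rw [Finset.mem_Icc] at hn
        rw [Finset.mem_Ico]
        have := Nat.lt_div_mul_add (a := x) hM
        constructor
        · omega
        · calc n ≤ x := hn.2
            _ < x/M*M + M := this
            _ = (x/M+1)*M := by ring
    _ ≤ (x/M+1) * M.totient := card_coprime_Ico_mul M _

lemma prod_one_sub_le_exp {s : Finset ℕ} (f : ℕ → ℝ) (hf : ∀ j ∈ s, 0 ≤ f j ∧ f j ≤ 1) :
    ∏ j ∈ s, (1 - f j) ≤ Real.exp (-(∑ j ∈ s, f j)) := by
  calc ∏ j ∈ s, (1 - f j) ≤ ∏ j ∈ s, Real.exp (-(f j)) := by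
        refine Finset.prod_le_prod (fun j hj => by linarith [(hf j hj).2]) (fun j hj => ?_)
        have := Real.add_one_le_exp (-(f j))
        linarith
    _ = Real.exp (∑ j ∈ s, -(f j)) := (Real.exp_sum s fun j => -(f j)).symm
    _ = Real.exp (-(∑ j ∈ s, f j)) := by rw [Finset.sum_neg_distrib]

theorem density_Sk_zero (k : ℕ) (hk : 2 ≤ k) :
    Tendsto (fun x : ℕ =>
        (Nat.card {n : ℕ | 1 ≤ n ∧ (∀ p : ℕ, p.Prime → p ∣ n → ¬ k ∣ primeIdx p)
          ∧ n ≤ x} : ℝ) / (x : ℝ))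
      atTop (nhds 0) := by
  classical
  set q : ℕ → ℕ := fun j => Nat.nth Nat.Prime (j*k + (k-1)) with hqdef
  have hqprime : ∀ j, (q j).Prime := fun j => Nat.prime_nth_prime _
  have hqmono : StrictMono q := by
    intro a b hab
    apply Nat.nth_strictMono Nat.infinite_setOf_prime
    have := Nat.mul_lt_mul_of_pos_right hab (show 0 < k by omega)
    omega
  have hqidx : ∀ j, k ∣ primeIdx (q j) := by
    intro j
    unfold primeIdx
    rw [hqdef]
    simp only
    rw [Nat.count_nth_of_infinite Nat.infinite_setOf_prime]
    refine ⟨j + 1, ?_⟩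
    have : k*(j+1) = j*k + k := by ring
    omega
  rw [NormedAddCommGroup.tendsto_nhds_zero]
  intro ε hε
  -- choose m with the product of (1 - 1/q j) less than ε/2
  have hT := tendsto_q_sums k hk not_summable_one_div_nth_prime
  have h0 : Tendsto (fun m => Real.exp (-(∑ j ∈ range m, (1:ℝ)/(q j)))) atTop (nhds 0) :=
    Real.tendsto_exp_atBot.comp (tendsto_neg_atTop_atBot.comp hT)
  obtain ⟨m, hm⟩ := (h0.eventually (gt_mem_nhds (half_pos hε))).exists
  set P : ℝ := ∏ j ∈ range m, (1 - 1/(q j : ℝ)) with hPdef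
  have hq2 : ∀ j, (2:ℝ) ≤ (q j : ℝ) := fun j => by exact_mod_cast (hqprime j).two_le
  have hfb : ∀ j ∈ range m, (0:ℝ) ≤ 1/(q j : ℝ) ∧ 1/(q j : ℝ) ≤ 1 := by
    intro j _
    constructor
    · positivity
    · rw [div_le_one (by linarith [hq2 j])]; linarith [hq2 j]
  have hPε : P < ε/2 :=
    lt_of_le_of_lt (prod_one_sub_le_exp _ hfb) hm
  have hP0 : 0 ≤ P := Finset.prod_nonneg fun j hj => by
    have := (hfb j hj).2; linarith
  have hP1 : P ≤ 1 := Finset.prod_le_one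
    (fun j hj => by linarith [(hfb j hj).2]) (fun j hj => by linarith [(hfb j hj).1])
  set M : ℕ := ∏ j ∈ range m, q j with hMdef
  have hM0 : 0 < M := Finset.prod_pos fun j _ => (hqprime j).pos
  have hφ : (M.totient : ℝ) = (M : ℝ) * P := by
    rw [hMdef, totient_prod_primes' (fun j _ => hqprime j)
      (hqmono.injective.injOn)]
    rw [Nat.cast_prod, Nat.cast_prod, ← Finset.prod_mul_distrib]
    refine Finset.prod_congr rfl fun j _ => ?_
    rw [Nat.cast_sub (hqprime j).one_lt.le]
    have h : ((q j : ℕ) : ℝ) ≠ 0 := by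
      have := hq2 j; linarith
    rw [mul_sub, mul_one, mul_one_div, div_self h]
    simp
  refine eventually_atTop.2 ⟨⌈(2*(M:ℝ)/ε : ℝ)⌉₊ + 1, fun x hx => ?_⟩
  have hx0 : 0 < x := by omega
  have hxR : (0:ℝ) < x := by exact_mod_cast hx0
  have hxlarge : 2*(M:ℝ)/ε < x := by
    calc 2*(M:ℝ)/ε ≤ ⌈(2*(M:ℝ)/ε : ℝ)⌉₊ := Nat.le_ceil _
      _ < x := by exact_mod_cast Nat.lt_of_lt_of_le (Nat.lt_succ_self _) hx
  have hMx : (M:ℝ) < ε/2 * x := by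
    rw [div_lt_iff₀ hε] at hxlarge
    linarith
  -- identify the set with a finset
  have hA : {n : ℕ | 1 ≤ n ∧ (∀ p : ℕ, p.Prime → p ∣ n → ¬ k ∣ primeIdx p) ∧ n ≤ x}
      = ↑((Finset.Icc 1 x).filter
          (fun n => ∀ p : ℕ, p.Prime → p ∣ n → ¬ k ∣ primeIdx p)) := by
    ext n
    simp only [Set.mem_setOf_eq, Finset.coe_filter, Finset.mem_Icc]
    tauto
  have hsub : (Finset.Icc 1 x).filter
        (fun n => ∀ p : ℕ, p.Prime → p ∣ n → ¬ k ∣ primeIdx p)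
      ⊆ (Finset.Icc 1 x).filter (Nat.Coprime M) := by
    intro n hn
    rw [Finset.mem_filter] at hn ⊢
    refine ⟨hn.1, ?_⟩
    by_contra hcop
    obtain ⟨r, hr, hrd⟩ := Nat.exists_prime_and_dvd hcop
    have hrM : r ∣ M := hrd.trans (Nat.gcd_dvd_left _ _)
    have hrn : r ∣ n := hrd.trans (Nat.gcd_dvd_right _ _)
    obtain ⟨j, hj, hjd⟩ := hr.prime.exists_mem_finset_dvd (hMdef ▸ hrM)
    have hre : r = q j := (Nat.prime_dvd_prime_iff_eq hr (hqprime j)).mp hjd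
    exact hn.2 r hr hrn (hre ▸ hqidx j)
  have hcard : (Nat.card {n : ℕ | 1 ≤ n ∧ (∀ p : ℕ, p.Prime → p ∣ n → ¬ k ∣ primeIdx p)
      ∧ n ≤ x}) ≤ (x / M + 1) * M.totient := by
    rw [hA, Nat.card_coe_set_eq, Set.ncard_coe_finset]
    exact le_trans (Finset.card_le_card hsub) (card_coprime_Icc M x hM0)
  have hcardR : (Nat.card {n : ℕ | 1 ≤ n ∧ (∀ p : ℕ, p.Prime → p ∣ n → ¬ k ∣ primeIdx p)
      ∧ n ≤ x} : ℝ) ≤ ((x / M : ℕ) + 1 : ℝ) * (M.totient : ℝ) := by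
    exact_mod_cast hcard
  have hdiv : ((x / M : ℕ) : ℝ) * M ≤ x := by
    have h := Nat.cast_div_le (α := ℝ) (m := x) (n := M)
    calc ((x / M : ℕ) : ℝ) * M ≤ ((x:ℝ)/(M:ℝ)) * M := by
          apply mul_le_mul_of_nonneg_right h (by positivity)
      _ = x := by field_simp
  rw [Real.norm_eq_abs, abs_of_nonneg (by positivity)]
  rw [div_lt_iff₀ hxR]
  have hMR : (1:ℝ) ≤ M := by exact_mod_cast hM0
  calc (Nat.card {n : ℕ | 1 ≤ n ∧ (∀ p : ℕ, p.Prime → p ∣ n → ¬ k ∣ primeIdx p)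
        ∧ n ≤ x} : ℝ)
      ≤ ((x / M : ℕ) + 1 : ℝ) * (M.totient : ℝ) := hcardR
    _ = ((x / M : ℕ) : ℝ) * M * P + M * P := by rw [hφ]; ring
    _ ≤ (x:ℝ) * P + M := by
        have h1 : ((x / M : ℕ) : ℝ) * M * P ≤ (x:ℝ) * P :=
          mul_le_mul_of_nonneg_right hdiv hP0
        have h2 : (M:ℝ) * P ≤ M := by nlinarith
        linarith
    _ < (x:ℝ) * (ε/2) + ε/2 * x := by
        have := mul_lt_mul_of_pos_left hPε hxR
        nlinarith
    _ = ε * x := by ring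
end

section
/- For n ≥ 2, every partition λ of size strictly greater than n satisfies N̂(λ) ≥ p_{n+1}; equivalently, if N̂(λ) < p_{n+1} then |λ| ≤ n. -/
/-- The supernorm of a partition (a multiset of positive integers). -/
noncomputable def supernorm (L : Multiset ℕ) : ℕ := (L.map nthPrime).prod

open Nat Finset
open scoped Nat.Prime

namespace Nat

theorem primeCounting_add_card_le {y N : ℕ} {S : Finset ℕ} (hyN : y ≤ N)
    (hS : ∀ p ∈ S, p.Prime ∧ y < p ∧ p ≤ N) : π y + #S ≤ π N := by
  rw [← primesLE_card_eq_primeCounting, ← primesLE_card_eq_primeCounting,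
    ← card_union_of_disjoint]
  · refine card_le_card (union_subset (primesLE_mono hyN) fun p hp ↦ ?_)
    exact mem_primesLE.2 ⟨(hS p hp).2.2, (hS p hp).1⟩
  · exact disjoint_right.2 fun p hp hp' ↦ (hS p hp).2.1.not_ge (le_of_mem_primesLE hp')

theorem three_mul_primeCounting_le (n : ℕ) : 3 * π n ≤ n + 9 := by
  have h6 : π 6 = 3 := by decide
  rcases lt_or_ge n 6 with hn | hn
  · have := monotone_primeCounting hn.le
    omega
  · -- beyond 6, only the residues coprime to 6 can be prime
    have := primeCounting_add_le (a := 6) (by norm_num) le_rfl (n - 6)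
    rw [h6, show φ 6 = 2 by decide, Nat.add_sub_cancel' hn] at this
    omega

theorem prod_primesLE_pow_factorization_centralBinom_le (m : ℕ) :
    ∏ p ∈ primesLE (2 * m / 3), p ^ (centralBinom m).factorization p ≤
      (2 * m) ^ π (sqrt (2 * m)) * 4 ^ (2 * m / 3) := by
  rcases Nat.eq_zero_or_pos m with rfl | hm
  · simp
  rw [← prod_filter_mul_prod_filter_not _ (· ≤ sqrt (2 * m))]
  gcongr ?_ * ?_
  · refine (prod_le_pow_card _ _ _ fun p _ ↦ pow_factorization_choose_le (by omega)).trans ?_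
    refine pow_le_pow_right₀ (by omega) ?_
    rw [← primesLE_card_eq_primeCounting]
    refine card_le_card fun p hp ↦ ?_
    rw [mem_filter, mem_primesLE] at hp
    exact mem_primesLE.2 ⟨hp.2, hp.1.2⟩
  · refine le_trans ?_ (primorial_le_four_pow (2 * m / 3))
    refine (prod_le_prod' fun p hp ↦ ?_).trans
      (prod_le_prod_of_subset_of_one_le' (filter_subset _ _) fun p hp _ ↦ ?_)
    · rw [mem_filter, mem_primesLE] at hp
      calc p ^ (centralBinom m).factorization p ≤ p ^ 1 :=
            pow_le_pow_right₀ hp.1.2.one_le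
              (factorization_choose_le_one (sqrt_lt'.1 (not_le.1 hp.2)))
        _ = p := pow_one p
    · exact (prime_of_mem_primesLE hp).one_le

theorem centralBinom_le_mul_pow_card {m : ℕ} (hm : 2 < m) :
    centralBinom m ≤ (2 * m) ^ π (sqrt (2 * m)) * 4 ^ (2 * m / 3) *
      (2 * m) ^ #{p ∈ primesLE (2 * m) | m < p} := by
  set f : ℕ → ℕ := fun p ↦ p ^ (centralBinom m).factorization p
  have hprod : ∏ p ∈ primesLE (2 * m), f p = centralBinom m := by
    rw [← prod_pow_factorization_centralBinom m, primesLE_eq_filter_range]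
    refine prod_filter_of_ne fun p _ h ↦ ?_
    contrapose! h
    simp [f, factorization_eq_zero_of_not_prime _ h]
  have hlow : ∏ p ∈ primesLE (2 * m) with ¬ m < p, f p = ∏ p ∈ primesLE (2 * m / 3), f p := by
    refine (prod_subset (fun p hp ↦ ?_) fun p hp hp' ↦ ?_).symm
    · rw [mem_primesLE] at hp
      rw [mem_filter, mem_primesLE]
      exact ⟨⟨by omega, hp.2⟩, by omega⟩
    · rw [mem_filter, mem_primesLE] at hp
      have hp3 : 2 * m / 3 < p := not_le.1 fun h ↦ hp' (mem_primesLE.2 ⟨h, hp.1.2⟩)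
      simp only [f, factorization_centralBinom_of_two_mul_self_lt_three_mul hm (not_lt.1 hp.2)
        (by omega), pow_zero]
  rw [← hprod, ← prod_filter_not_mul_prod_filter _ (m < ·), hlow]
  gcongr ?_ * ?_
  · exact prod_primesLE_pow_factorization_centralBinom_le m
  · exact prod_le_pow_card _ _ _ fun p _ ↦ pow_factorization_choose_le (by omega)

theorem four_pow_lt_pow_card {m : ℕ} (hm : 4 ≤ m) :
    4 ^ (m - 2 * m / 3) < (2 * m) ^ (π (sqrt (2 * m)) + #{p ∈ primesLE (2 * m) | m < p} + 1) := by
  set s := π (sqrt (2 * m))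
  set k := #{p ∈ primesLE (2 * m) | m < p}
  refine Nat.lt_of_mul_lt_mul_left (a := 4 ^ (2 * m / 3)) ?_
  calc 4 ^ (2 * m / 3) * 4 ^ (m - 2 * m / 3) = 4 ^ m := by rw [← pow_add]; congr 1; omega
    _ < m * centralBinom m := four_pow_lt_mul_centralBinom m hm
    _ ≤ 2 * m * ((2 * m) ^ s * 4 ^ (2 * m / 3) * (2 * m) ^ k) := by
      gcongr
      · omega
      · exact centralBinom_le_mul_pow_card (by omega)
    _ = 4 ^ (2 * m / 3) * (2 * m) ^ (s + k + 1) := by ring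

theorem log_add_one_mul_le {M : ℕ} (hM : 1024 ≤ M) : (log 2 M + 1) * (2 * sqrt M + 20) ≤ M := by
  set t := log 2 M / 2
  have hlog : 10 ≤ log 2 M := le_log_of_pow_le (by norm_num) (by norm_num; omega)
  have hsqrt : 2 ^ t ≤ sqrt M := by
    rw [le_sqrt, ← pow_add]
    exact (pow_le_pow_right₀ (by norm_num) (by omega)).trans (pow_log_le_self 2 (by omega))
  have key : (2 * t + 2) * (2 * 2 ^ t + 20) ≤ 2 ^ t * 2 ^ t := by
    induction t, (by omega : 5 ≤ t) using Nat.le_induction with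
    | base => norm_num
    | succ t _ ih => rw [pow_succ]; nlinarith
  have hR : 4 * t + 4 ≤ 2 ^ t :=
    Nat.le_of_mul_le_mul_right (by nlinarith : (4 * t + 4) * 2 ^ t ≤ 2 ^ t * 2 ^ t)
      (by positivity)
  calc (log 2 M + 1) * (2 * sqrt M + 20) ≤ (2 * t + 2) * (2 * sqrt M + 20) :=
        Nat.mul_le_mul_right _ (by omega)
    _ ≤ sqrt M * sqrt M := by nlinarith
    _ ≤ M := sqrt_le M

theorem primeCounting_sqrt_add_one_le_card {m : ℕ} (hm : 512 ≤ m) :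
    π (sqrt (2 * m) + 1) ≤ #{p ∈ primesLE (2 * m) | m < p} := by
  set r := sqrt (2 * m)
  set k := #{p ∈ primesLE (2 * m) | m < p}
  set L := log 2 (2 * m)
  by_contra! hk
  have hexp : 2 * (m - 2 * m / 3) < (L + 1) * (π r + k + 1) := by
    refine (Nat.pow_lt_pow_iff_right (a := 2) (by norm_num)).1 ?_
    calc 2 ^ (2 * (m - 2 * m / 3)) = 4 ^ (m - 2 * m / 3) := by rw [pow_mul]; norm_num
      _ < (2 * m) ^ (π r + k + 1) := four_pow_lt_pow_card (by omega)
      _ ≤ (2 ^ (L + 1)) ^ (π r + k + 1) := by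
        gcongr; exact (lt_pow_succ_log_self (by norm_num) _).le
      _ = 2 ^ ((L + 1) * (π r + k + 1)) := by rw [← pow_mul]
  have hcount : 3 * (π r + k + 1) ≤ 2 * r + 20 := by
    have := monotone_primeCounting (Nat.le_add_right r 1)
    have := three_mul_primeCounting_le (r + 1)
    omega
  have : 2 * m < 2 * m :=
    calc 2 * m ≤ 3 * (2 * (m - 2 * m / 3)) := by omega
      _ < 3 * ((L + 1) * (π r + k + 1)) := by omega
      _ = (L + 1) * (3 * (π r + k + 1)) := by ring
      _ ≤ (L + 1) * (2 * r + 20) := Nat.mul_le_mul_left _ hcount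
      _ ≤ 2 * m := log_add_one_mul_le (by omega)
  exact lt_irrefl _ this

theorem primeCounting_nth_eq (n : ℕ) : π (nth Prime n) = n + 1 := by
  rw [primeCounting, primeCounting', count_succ, ← primeCounting', primeCounting'_nth_eq,
    if_pos (prime_nth_prime n)]

theorem primeCounting_add_primeCounting_le_of_le_mul {x y : ℕ} (hx : 2 ≤ x) (hxy : x ≤ y)
    (hN : 1024 ≤ x * y) : π x + π y ≤ π (x * y) := by
  set m := x * y / 2
  have hym : y ≤ m := by
    have := Nat.mul_le_mul_right y hx
    omega
  have hx_le : x ≤ sqrt (2 * m) + 1 := by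
    obtain ⟨z, rfl⟩ : ∃ z, x = z + 1 := ⟨x - 1, by omega⟩
    have := Nat.mul_le_mul_left (z + 1) hxy
    have : (z + 1) * y ≤ 2 * m + 1 := by omega
    have : z * z ≤ 2 * m := by nlinarith
    exact Nat.add_le_add_right (le_sqrt.2 this) 1
  calc π x + π y ≤ #{p ∈ primesLE (2 * m) | m < p} + π y := by
        gcongr
        exact (monotone_primeCounting hx_le).trans (primeCounting_sqrt_add_one_le_card (by omega))
    _ = π y + #{p ∈ primesLE (2 * m) | m < p} := add_comm _ _
    _ ≤ π (2 * m) := primeCounting_add_card_le (by omega) fun p hp ↦ by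
        rw [mem_filter, mem_primesLE] at hp
        exact ⟨hp.1.2, by omega, hp.1.1⟩
    _ ≤ π (x * y) := monotone_primeCounting (by omega)

def primeLadder : Finset ℕ :=
  {2, 3, 5, 7, 11, 13, 17, 19, 23, 29, 31, 37, 41, 47, 59, 61, 79, 97, 149, 211, 347, 521}

theorem prime_of_mem_primeLadder : ∀ p ∈ primeLadder, p.Prime := by decide +kernel

theorem mem_primeLadder_of_prime : ∀ p ≤ 31, p.Prime → p ∈ primeLadder := by decide +kernel

theorem card_filter_primeLadder_le :
    ∀ x ∈ primeLadder, x ≤ 31 → ∀ y ∈ Icc x (1023 / x),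
      #{p ∈ primeLadder | p ≤ x} ≤ #{p ∈ primeLadder | y < p ∧ p ≤ x * y} := by
  decide +kernel

theorem primeCounting_add_primeCounting_le_of_mul_lt {p y : ℕ} (hp : p.Prime) (hpy : p ≤ y)
    (hN : p * y < 1024) : π p + π y ≤ π (p * y) := by
  have hp31 : p ≤ 31 := by nlinarith
  calc π p + π y ≤ #{q ∈ primeLadder | q ≤ p} + π y := by
        rw [← primesLE_card_eq_primeCounting]
        gcongr
        intro q hq
        rw [mem_primesLE] at hq
        exact mem_filter.2 ⟨mem_primeLadder_of_prime q (by omega) hq.2, hq.1⟩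
    _ ≤ #{q ∈ primeLadder | y < q ∧ q ≤ p * y} + π y := Nat.add_le_add_right
        (card_filter_primeLadder_le p (mem_primeLadder_of_prime p hp31 hp) hp31 y
          (mem_Icc.2 ⟨hpy, (Nat.le_div_iff_mul_le hp.pos).2 (by rw [mul_comm]; omega)⟩)) _
    _ = π y + #{q ∈ primeLadder | y < q ∧ q ≤ p * y} := add_comm _ _
    _ ≤ π (p * y) := primeCounting_add_card_le (Nat.le_mul_of_pos_left y hp.pos) fun q hq ↦ by
        rw [mem_filter] at hq
        exact ⟨prime_of_mem_primeLadder q hq.1, hq.2⟩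

theorem primeCounting_add_primeCounting_le {p y : ℕ} (hp : p.Prime) (hpy : p ≤ y) :
    π p + π y ≤ π (p * y) := by
  rcases lt_or_ge (p * y) 1024 with hN | hN
  · exact primeCounting_add_primeCounting_le_of_mul_lt hp hpy hN
  · exact primeCounting_add_primeCounting_le_of_le_mul hp.two_le hpy hN

theorem nth_prime_add_add_one_le_mul (a b : ℕ) :
    nth Prime (a + b + 1) ≤ nth Prime a * nth Prime b := by
  wlog hab : a ≤ b generalizing a b
  · rw [add_comm a b, mul_comm]
    exact this b a (le_of_not_ge hab)
  have h := primeCounting_add_primeCounting_le (prime_nth_prime a)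
    (nth_monotone (p := Prime) infinite_setOfPred_prime hab)
  rw [primeCounting_nth_eq, primeCounting_nth_eq] at h
  have : a + b + 1 < count Prime (nth Prime a * nth Prime b + 1) := by
    change _ < π _
    omega
  exact le_of_lt_succ (nth_lt_of_lt_count this)

end Nat

theorem nthPrime_mono : Monotone nthPrime := fun _ _ h ↦
  nth_monotone infinite_setOfPred_prime (Nat.sub_le_sub_right h 1)

theorem nthPrime_add_le_mul (i j : ℕ) : nthPrime (i + j) ≤ nthPrime i * nthPrime j :=
  (nth_monotone infinite_setOfPred_prime (by omega)).trans
    (nth_prime_add_add_one_le_mul (i - 1) (j - 1))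

theorem nthPrime_sum_le_supernorm {L : Multiset ℕ} (hL : L ≠ 0) :
    nthPrime L.sum ≤ supernorm L := by
  induction L using Multiset.induction_on with
  | empty => exact absurd rfl hL
  | cons i M ih =>
    rw [supernorm, Multiset.map_cons, Multiset.prod_cons, Multiset.sum_cons]
    rcases eq_or_ne M 0 with rfl | hM
    · simp
    · exact (nthPrime_add_le_mul i M.sum).trans (Nat.mul_le_mul_left _ (ih hM))

theorem supernorm_ge_of_size_gt_general (n : ℕ) (L : Multiset ℕ) (hsize : n < L.sum) :
    nthPrime (n + 1) ≤ supernorm L :=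
  (nthPrime_mono hsize).trans (nthPrime_sum_le_supernorm (by rintro rfl; simp at hsize))

theorem supernorm_ge_of_size_gt (n : ℕ) (hn : 2 ≤ n) (L : Multiset ℕ)
    (hparts : ∀ i ∈ L, 1 ≤ i) (hsize : n < L.sum) :
    nthPrime (n + 1) ≤ supernorm L :=
  supernorm_ge_of_size_gt_general n L hsize
end
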